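/- Let (x^k)_{k ≥ −1} be a cDCA sequence with x⁰ ∈ dom g, and suppose F is level-bounded (for every r ∈ ℝ the set {x ∈ ℝⁿ : F(x) ≤ r} is bounded). Then every accumulation point x̂ of the sequence (x^k) is a critical point of F, i.e., 0 ∈ ∇f(x̂) + ∂g(x̂) − ∂h(x̂). -/

import Mathlib

/-!
Write `xᵏ` for the iterates and `ξᵏ = (L/2)(yᵏ - x^{k+1}) + λ(xᵏ - x^{k+1}) - ∇f(yᵏ) + ηᵏ`; the
choice `μ = 2/(2λ + L)` makes the optimality condition of the prox step read `ξᵏ ∈ ∂g(x^{k+1})`.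
By co-coercivity, `(2/L)∇f - id` is nonexpansive, and adding the subgradient inequalities of `f`,
`g` and `h` gives the sufficient decrease
`F(x^{k+1}) + (λ/2)‖xᵏ - x^{k+1}‖² ≤ F(xᵏ) + (L²/(8λ))‖x^{k+1} - yᵏ‖²`.
With `‖x^{k+1} - yᵏ‖ ≤ δ‖x^{k-1} - xᵏ‖` and `τ = L²δ²/(8λ) < λ/2`, the merit function
`F(xᵏ) + τ‖x^{k-1} - xᵏ‖²` therefore drops by at least `(λ/2 - τ)‖xᵏ - x^{k+1}‖²` per step.
Lower semicontinuity bounds it from below near the cluster point `x̂`, so the steps tend to `0`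
and `xᵏ, x^{k+1}, yᵏ → x̂` along the subsequence. The subgradients `ηᵏ` of the continuous convex
`h` are locally bounded; along a further subsequence `ηᵏ → ζ`, hence `ξᵏ → ζ - ∇f(x̂)`, and the
closedness of the graphs of `∂h` and (by lower semicontinuity) of `∂g` puts these limits in
`∂h(x̂)` and `∂g(x̂)`.
-/

open Set Filter Topology
open scoped InnerProductSpace

noncomputable section

abbrev Euc (n : ℕ) := EuclideanSpace ℝ (Fin n)

/-- The subdifferential of an extended-real-valued function `g` at `u`. -/
def SubdiffE {n : ℕ} (g : Euc n → EReal) (u : Euc n) : Set (Euc n) :=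
  {ξ | ∀ z, g u + ((⟪ξ, z - u⟫_ℝ : ℝ) : EReal) ≤ g z}

/-- The subdifferential of a real-valued function `h` at `u`. -/
def SubdiffR {n : ℕ} (h : Euc n → ℝ) (u : Euc n) : Set (Euc n) :=
  {ξ | ∀ z, h u + ⟪ξ, z - u⟫_ℝ ≤ h z}

/-- Convexity for extended-real-valued functions. -/
def ConvexEReal {n : ℕ} (g : Euc n → EReal) : Prop :=
  ∀ x y : Euc n, ∀ a b : ℝ, 0 ≤ a → 0 ≤ b → a + b = 1 →
    g (a • x + b • y) ≤ (a : EReal) * g x + (b : EReal) * g y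

/-- `g` is proper: nowhere `⊥` and somewhere finite. -/
def ProperE {n : ℕ} (g : Euc n → EReal) : Prop :=
  (∀ x, g x ≠ ⊥) ∧ ∃ x, g x ≠ ⊤

/-- `P` is the proximal mapping of `g`: for every `α > 0` and every `x`, `P α x` is
the unique minimizer over `ℝⁿ` of `y ↦ g y + (1/(2α)) ‖x - y‖²`. -/
def IsProx {n : ℕ} (g : Euc n → EReal) (P : ℝ → Euc n → Euc n) : Prop :=
  ∀ α : ℝ, 0 < α → ∀ x p, P α x = p ↔
    (∀ y, g p + ((1/(2*α) * ‖x - p‖^2 : ℝ) : EReal) ≤ g y + ((1/(2*α) * ‖x - y‖^2 : ℝ) : EReal))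

/-- A cDCA sequence, indexed so that `x 0 = x⁻¹` and `x (k+1) = xᵏ` for `k ≥ 0`:
for every `k ≥ 0` there exist `ηᵏ ∈ ∂h(xᵏ)` and `yᵏ` with
`x^{k+1} = Prox_{μg}((1-μλ)yᵏ - μ∇f(yᵏ) + μλxᵏ + μηᵏ)` and
`‖x^{k+1} - yᵏ‖ ≤ δ‖x^{k-1} - xᵏ‖`. -/
def IsCDCA {n : ℕ} (f' : Euc n → Euc n) (h : Euc n → ℝ) (P : ℝ → Euc n → Euc n)
    (lam mu δ : ℝ) (x : ℕ → Euc n) : Prop :=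
  ∀ k : ℕ, ∃ η ∈ SubdiffR h (x (k+1)), ∃ y,
    x (k+2) = P mu ((1 - mu*lam) • y - mu • f' y + (mu*lam) • x (k+1) + mu • η) ∧
    ‖x (k+2) - y‖ ≤ δ * ‖x k - x (k+1)‖

section SmoothConvex

variable {E : Type*} [NormedAddCommGroup E] [InnerProductSpace ℝ E] [CompleteSpace E]
  {f : E → ℝ} {f' : E → E} {L : ℝ}

theorem HasGradientAt.hasDerivAt_comp_add_smul {a d v : E} {t : ℝ}
    (hf : HasGradientAt f v (a + t • d)) :
    HasDerivAt (fun s : ℝ => f (a + s • d)) ⟪v, d⟫_ℝ t := by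
  have hline : HasDerivAt (fun s : ℝ => a + s • d) d t := by
    simpa using ((hasDerivAt_id t).smul_const d).const_add a
  have := hf.hasFDerivAt.comp_hasDerivAt t hline
  simp only [InnerProductSpace.toDual_apply_apply] at this
  exact this

theorem ConvexOn.add_inner_le_of_hasGradientAt (hfc : ConvexOn ℝ univ f) {u v : E}
    (hf : HasGradientAt f v u) (z : E) : f u + ⟪v, z - u⟫_ℝ ≤ f z := by
  have hline : ConvexOn ℝ univ (fun s : ℝ => f (u + s • (z - u))) := by
    simpa [Function.comp_def, AffineMap.lineMap_apply, add_comm] using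
      hfc.comp_affineMap (AffineMap.lineMap u z)
  have hderiv := (show HasGradientAt f v (u + (0 : ℝ) • (z - u)) by simpa using hf)
    |>.hasDerivAt_comp_add_smul
  have := hline.le_slope_of_hasDerivAt (mem_univ 0) (mem_univ 1) one_pos hderiv
  simp only [slope_def_field, one_smul, add_sub_cancel, zero_smul, add_zero, sub_zero,
    div_one] at this
  linarith

theorem le_add_inner_add_sq_of_lipschitz_gradient (hf : ∀ z, HasGradientAt f (f' z) z)
    (hL : ∀ z w, ‖f' z - f' w‖ ≤ L * ‖z - w‖) (a b : E) :
    f b ≤ f a + ⟪f' a, b - a⟫_ℝ + L / 2 * ‖b - a‖ ^ 2 := by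
  set d := b - a
  set ψ : ℝ → ℝ := fun t => f (a + t • d) - t * ⟪f' a, d⟫_ℝ - L / 2 * t ^ 2 * ‖d‖ ^ 2
  have hψ : ∀ t, HasDerivAt ψ (⟪f' (a + t • d), d⟫_ℝ - ⟪f' a, d⟫_ℝ - L * t * ‖d‖ ^ 2) t := by
    intro t
    have := (((hf (a + t • d)).hasDerivAt_comp_add_smul).sub
      ((hasDerivAt_id t).mul_const ⟪f' a, d⟫_ℝ)).sub
      (((hasDerivAt_pow 2 t).const_mul (L / 2)).mul_const (‖d‖ ^ 2))
    exact this.congr_deriv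
      (by simp only [one_mul, Nat.add_one_sub_one, pow_one, Nat.cast_ofNat]; ring)
  have hanti : AntitoneOn ψ (Ici 0) := by
    refine antitoneOn_of_hasDerivWithinAt_nonpos (convex_Ici 0)
      (fun t _ => (hψ t).continuousAt.continuousWithinAt) (fun t _ => (hψ t).hasDerivWithinAt) ?_
    intro t ht
    rw [interior_Ici, mem_Ioi] at ht
    have hlip : ‖f' (a + t • d) - f' a‖ ≤ L * (t * ‖d‖) := by
      simpa [norm_smul, abs_of_pos ht] using hL (a + t • d) a
    calc ⟪f' (a + t • d), d⟫_ℝ - ⟪f' a, d⟫_ℝ - L * t * ‖d‖ ^ 2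
        = ⟪f' (a + t • d) - f' a, d⟫_ℝ - L * t * ‖d‖ ^ 2 := by rw [inner_sub_left]
      _ ≤ ‖f' (a + t • d) - f' a‖ * ‖d‖ - L * t * ‖d‖ ^ 2 := by
          gcongr; exact real_inner_le_norm _ _
      _ ≤ L * (t * ‖d‖) * ‖d‖ - L * t * ‖d‖ ^ 2 := by gcongr
      _ = 0 := by ring
  have h01 : ψ 1 ≤ ψ 0 := hanti (mem_Ici.2 le_rfl) (mem_Ici.2 zero_le_one) zero_le_one
  simp only [ψ, d, one_smul, zero_smul, add_sub_cancel, add_zero, one_mul, one_pow, mul_one,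
    zero_mul, sub_zero, ne_eq, OfNat.ofNat_ne_zero, not_false_eq_true, zero_pow, mul_zero] at h01
  linarith

theorem ConvexOn.add_inner_add_sq_norm_sub_le (hfc : ConvexOn ℝ univ f) (hLpos : 0 < L)
    (hf : ∀ z, HasGradientAt f (f' z) z) (hL : ∀ z w, ‖f' z - f' w‖ ≤ L * ‖z - w‖) (y p : E) :
    f y + ⟪f' y, p - y⟫_ℝ + ‖f' p - f' y‖ ^ 2 / (2 * L) ≤ f p := by
  set Δ := f' p - f' y
  -- compare `f` at `p` and at `y` through the point `p - Δ / L`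
  set z := p - L⁻¹ • Δ
  have hdesc := le_add_inner_add_sq_of_lipschitz_gradient hf hL p z
  have hconv := hfc.add_inner_le_of_hasGradientAt (hf y) z
  have hzp : z - p = -(L⁻¹ • Δ) := by simp [z]
  have hzy : z - y = (p - y) - L⁻¹ • Δ := by simp only [z]; abel
  rw [hzp, inner_neg_right, real_inner_smul_right, norm_neg, norm_smul,
    Real.norm_of_nonneg (inv_nonneg.2 hLpos.le)] at hdesc
  rw [hzy, inner_sub_right, real_inner_smul_right] at hconv
  have hΔ : ⟪f' p, Δ⟫_ℝ - ⟪f' y, Δ⟫_ℝ = ‖Δ‖ ^ 2 := by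
    rw [← inner_sub_left, real_inner_self_eq_norm_sq]
  have hsplit : ‖Δ‖ ^ 2 / (2 * L)
      = L⁻¹ * (⟪f' p, Δ⟫_ℝ - ⟪f' y, Δ⟫_ℝ) - L / 2 * (L⁻¹ * ‖Δ‖) ^ 2 := by
    rw [hΔ]; field_simp; ring
  linarith

theorem ConvexOn.sq_norm_sub_div_le_inner (hfc : ConvexOn ℝ univ f) (hLpos : 0 < L)
    (hf : ∀ z, HasGradientAt f (f' z) z) (hL : ∀ z w, ‖f' z - f' w‖ ≤ L * ‖z - w‖) (y p : E) :
    ‖f' p - f' y‖ ^ 2 / L ≤ ⟪f' p - f' y, p - y⟫_ℝ := by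
  have h₁ := hfc.add_inner_add_sq_norm_sub_le hLpos hf hL y p
  have h₂ := hfc.add_inner_add_sq_norm_sub_le hLpos hf hL p y
  rw [norm_sub_rev] at h₂
  have hyp : ⟪f' p, y - p⟫_ℝ = -⟪f' p, p - y⟫_ℝ := by rw [← inner_neg_right, neg_sub]
  have hsum : ‖f' p - f' y‖ ^ 2 / L
      = ‖f' p - f' y‖ ^ 2 / (2 * L) + ‖f' p - f' y‖ ^ 2 / (2 * L) := by
    field_simp; ring
  rw [inner_sub_left]
  linarith

theorem ConvexOn.norm_sub_sub_smul_le (hfc : ConvexOn ℝ univ f) (hLpos : 0 < L)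
    (hf : ∀ z, HasGradientAt f (f' z) z) (hL : ∀ z w, ‖f' z - f' w‖ ≤ L * ‖z - w‖) (y p : E) :
    ‖f' p - f' y - (L / 2) • (p - y)‖ ≤ L / 2 * ‖p - y‖ := by
  have hcoco := hfc.sq_norm_sub_div_le_inner hLpos hf hL y p
  rw [div_le_iff₀ hLpos] at hcoco
  refine pow_le_pow_iff_left₀ (norm_nonneg _) (by positivity) two_ne_zero |>.1 ?_
  rw [norm_sub_sq_real, real_inner_smul_right, norm_smul, Real.norm_of_nonneg (by positivity)]
  nlinarith

end SmoothConvex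

theorem LowerSemicontinuous.exists_real_eventually_lt {α : Type*} [TopologicalSpace α]
    {g : α → EReal} (hg : LowerSemicontinuous g) {a : α} (ha : g a ≠ ⊥) :
    ∃ r : ℝ, ∀ᶠ z in 𝓝 a, (r : EReal) < g z := by
  obtain ⟨r, -, hr⟩ := EReal.lt_iff_exists_real_btwn.1 (bot_lt_iff_ne_bot.2 ha)
  exact ⟨r, hg a r hr⟩

section Subdifferential

variable {n : ℕ}

theorem norm_le_of_mem_subdiffR {h : Euc n → ℝ} {w η : Euc n} {C : ℝ} (hη : η ∈ SubdiffR h w)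
    (hC : ∀ z ∈ Metric.closedBall w 1, |h z| ≤ C) : ‖η‖ ≤ 2 * C := by
  have hw := abs_le.1 (hC w (Metric.mem_closedBall_self zero_le_one))
  rcases eq_or_ne η 0 with rfl | hη0
  · rw [norm_zero]; linarith
  -- test the subgradient inequality in the unit direction of `η`
  have hnorm : ‖η‖ ≠ 0 := norm_ne_zero_iff.2 hη0
  have hunit : ‖‖η‖⁻¹ • η‖ = 1 := by rw [norm_smul, norm_inv, norm_norm, inv_mul_cancel₀ hnorm]
  have hwu := abs_le.1 (hC (w + ‖η‖⁻¹ • η) (by simp [hunit]))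
  have hsub := hη (w + ‖η‖⁻¹ • η)
  rw [add_sub_cancel_left, real_inner_smul_right, real_inner_self_eq_norm_sq, sq,
    inv_mul_cancel_left₀ hnorm] at hsub
  linarith

theorem mem_subdiffR_of_tendsto {ι : Type*} {l : Filter ι} [l.NeBot] {h : Euc n → ℝ}
    (hh : Continuous h) {w η : ι → Euc n} {w₀ η₀ : Euc n} (hw : Tendsto w l (𝓝 w₀))
    (hη : Tendsto η l (𝓝 η₀)) (hmem : ∀ i, η i ∈ SubdiffR h (w i)) :
    η₀ ∈ SubdiffR h w₀ := fun z =>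
  le_of_tendsto (((hh.tendsto w₀).comp hw).add (hη.inner (tendsto_const_nhds.sub hw)))
    (Eventually.of_forall fun i => hmem i z)

theorem mem_subdiffE_of_tendsto {ι : Type*} {l : Filter ι} [l.NeBot] {g : Euc n → EReal}
    (hg : LowerSemicontinuous g) (hg_bot : ∀ z, g z ≠ ⊥) {p ξ : ι → Euc n} {p₀ ξ₀ : Euc n}
    (hp : Tendsto p l (𝓝 p₀)) (hξ : Tendsto ξ l (𝓝 ξ₀)) (hmem : ∀ i, ξ i ∈ SubdiffE g (p i)) :
    ξ₀ ∈ SubdiffE g p₀ := by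
  intro z
  rcases eq_or_ne (g z) ⊤ with hz | hz
  · rw [hz]; exact le_top
  lift g z to ℝ using ⟨hz, hg_bot z⟩ with b hb
  have hc : Tendsto (fun i => b - ⟪ξ i, z - p i⟫_ℝ) l (𝓝 (b - ⟪ξ₀, z - p₀⟫_ℝ)) :=
    tendsto_const_nhds.sub (hξ.inner (tendsto_const_nhds.sub hp))
  rw [← EReal.le_sub_iff_add_le (.inl (EReal.coe_ne_bot _)) (.inl (EReal.coe_ne_top _)),
    ← EReal.coe_sub]
  refine le_of_forall_lt_imp_le_of_dense fun r hr => ?_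
  refine ge_of_tendsto ((continuous_coe_real_ereal.tendsto _).comp hc) ?_
  filter_upwards [hp.eventually (hg p₀ r hr)] with i hi
  have hi' := hmem i z
  rw [← hb, ← EReal.le_sub_iff_add_le (.inl (EReal.coe_ne_bot _)) (.inl (EReal.coe_ne_top _)),
    ← EReal.coe_sub] at hi'
  exact (hi.trans_le hi').le

end Subdifferential

section Prox

variable {n : ℕ} {g : Euc n → EReal} {P : ℝ → Euc n → Euc n} {μ : ℝ}

theorem IsProx.ne_top (hP : IsProx g P) (hg : ProperE g) (hμ : 0 < μ) (v : Euc n) :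
    g (P μ v) ≠ ⊤ := by
  obtain ⟨x₀, hx₀⟩ := hg.2
  intro htop
  have hmin := (hP μ hμ v _).1 rfl x₀
  rw [htop, EReal.top_add_of_ne_bot (EReal.coe_ne_bot _), top_le_iff] at hmin
  exact (EReal.add_lt_top hx₀ (EReal.coe_ne_top _)).ne hmin

theorem IsProx.inv_smul_sub_mem_subdiffE (hP : IsProx g P) (hg : ProperE g)
    (hgc : ConvexEReal g) (hμ : 0 < μ) (v : Euc n) :
    μ⁻¹ • (v - P μ v) ∈ SubdiffE g (P μ v) := by
  set p := P μ v
  have hmin := (hP μ hμ v p).1 rfl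
  intro z
  rcases eq_or_ne (g z) ⊤ with hz | hz
  · rw [hz]; exact le_top
  lift g z to ℝ using ⟨hz, hg.1 z⟩ with b hb
  lift g p to ℝ using ⟨hP.ne_top hg hμ v, hg.1 p⟩ with a ha
  set c := 1 / (2 * μ)
  -- compare `p` with the points `t • z + (1 - t) • p` of the segment, then let `t → 0⁺`
  have hseg : ∀ t ∈ Ioc (0 : ℝ) 1,
      a + 2 * c * ⟪v - p, z - p⟫_ℝ ≤ b + t * (c * ‖z - p‖ ^ 2) := by
    intro t ht
    have hconv := hgc z p t (1 - t) ht.1.le (sub_nonneg.2 ht.2) (add_sub_cancel _ _)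
    rw [← hb, ← ha, ← EReal.coe_mul, ← EReal.coe_mul, ← EReal.coe_add] at hconv
    have hcmp := (hmin (t • z + (1 - t) • p)).trans (add_le_add_left hconv _)
    rw [← EReal.coe_add, ← EReal.coe_add, EReal.coe_le_coe_iff] at hcmp
    have hnorm : ‖v - (t • z + (1 - t) • p)‖ ^ 2
        = ‖v - p‖ ^ 2 - 2 * t * ⟪v - p, z - p⟫_ℝ + t ^ 2 * ‖z - p‖ ^ 2 := by
      rw [show v - (t • z + (1 - t) • p) = (v - p) - t • (z - p) by module, norm_sub_sq_real,
        real_inner_smul_right, norm_smul, Real.norm_of_nonneg ht.1.le]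
      ring
    rw [hnorm] at hcmp
    refine le_of_mul_le_mul_left ?_ ht.1
    linarith
  have hlim : Tendsto (fun t : ℝ => b + t * (c * ‖z - p‖ ^ 2)) (𝓝[>] 0) (𝓝 b) := by
    have hcont : Continuous fun t : ℝ => b + t * (c * ‖z - p‖ ^ 2) := by fun_prop
    simpa using (hcont.tendsto 0).mono_left nhdsWithin_le_nhds
  have hreal := ge_of_tendsto hlim (mem_of_superset (Ioc_mem_nhdsGT one_pos) hseg)
  have hc : μ⁻¹ = 2 * c := by simp only [c]; field_simp
  rw [real_inner_smul_left, ← EReal.coe_add, EReal.coe_le_coe_iff, hc]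
  exact hreal

end Prox

theorem merit_descent_of_mem_subdiff {n : ℕ} {f h : Euc n → ℝ} {f' : Euc n → Euc n}
    {g : Euc n → EReal} {L lam : ℝ} (hLpos : 0 < L) (hlam : 0 < lam) (hfc : ConvexOn ℝ univ f)
    (hf : ∀ z, HasGradientAt f (f' z) z) (hL : ∀ z w, ‖f' z - f' w‖ ≤ L * ‖z - w‖)
    (hg_bot : ∀ z, g z ≠ ⊥) {w p y η : Euc n} (hw : g w ≠ ⊤) (hp : g p ≠ ⊤)
    (hη : η ∈ SubdiffR h w)
    (hξ : (L / 2) • (y - p) + lam • (w - p) - f' y + η ∈ SubdiffE g p) :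
    f p - h p + (g p).toReal + lam / 2 * ‖w - p‖ ^ 2
      ≤ f w - h w + (g w).toReal + L ^ 2 / (8 * lam) * ‖p - y‖ ^ 2 := by
  set ξ := (L / 2) • (y - p) + lam • (w - p) - f' y + η
  set D := f' p - f' y - (L / 2) • (p - y)
  have hf_le : f p + ⟪f' p, w - p⟫_ℝ ≤ f w := hfc.add_inner_le_of_hasGradientAt (hf p) w
  have hh_le : h w + ⟪η, p - w⟫_ℝ ≤ h p := hη p
  rw [← neg_sub, inner_neg_right] at hh_le
  have hg_le : (g p).toReal + ⟪ξ, w - p⟫_ℝ ≤ (g w).toReal := by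
    have := hξ w
    rwa [← EReal.coe_toReal hp (hg_bot p), ← EReal.coe_toReal hw (hg_bot w), ← EReal.coe_add,
      EReal.coe_le_coe_iff] at this
  have hsplit : ⟪f' p, w - p⟫_ℝ - ⟪η, w - p⟫_ℝ + ⟪ξ, w - p⟫_ℝ
      = ⟪D, w - p⟫_ℝ + lam * ‖w - p‖ ^ 2 := by
    rw [← inner_sub_left, ← inner_add_left, ← real_inner_self_eq_norm_sq, ← real_inner_smul_left,
      ← inner_add_left]
    congr 1
    simp only [ξ, D]
    module
  have hcs : -⟪D, w - p⟫_ℝ ≤ L / 2 * ‖p - y‖ * ‖w - p‖ :=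
    calc -⟪D, w - p⟫_ℝ ≤ ‖-D‖ * ‖w - p‖ := by
          rw [← inner_neg_left]; exact real_inner_le_norm _ _
      _ ≤ L / 2 * ‖p - y‖ * ‖w - p‖ := by
        rw [norm_neg]; gcongr; exact hfc.norm_sub_sub_smul_le hLpos hf hL y p
  have hyoung : L / 2 * ‖p - y‖ * ‖w - p‖
      ≤ L ^ 2 / (8 * lam) * ‖p - y‖ ^ 2 + lam / 2 * ‖w - p‖ ^ 2 := by
    have hsq : 0 ≤ (L * ‖p - y‖ - 2 * lam * ‖w - p‖) ^ 2 / (8 * lam) := by positivity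
    have hexp : (L * ‖p - y‖ - 2 * lam * ‖w - p‖) ^ 2 / (8 * lam)
        = L ^ 2 / (8 * lam) * ‖p - y‖ ^ 2 + lam / 2 * ‖w - p‖ ^ 2
          - L / 2 * ‖p - y‖ * ‖w - p‖ := by
      field_simp; ring
    linarith
  linarith

theorem tendsto_zero_of_add_mul_le_of_bddBelow {E a : ℕ → ℝ} {c : ℝ} (hc : 0 < c)
    (ha : ∀ k, 0 ≤ a k) (hE : ∀ k, E (k + 1) + c * a k ≤ E k) (hbdd : BddBelow (range E)) :
    Tendsto a atTop (𝓝 0) := by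
  have hanti : Antitone E :=
    antitone_nat_of_succ_le fun k => by linarith [hE k, mul_nonneg hc.le (ha k)]
  have hlim := tendsto_atTop_ciInf hanti hbdd
  have hgap : Tendsto (fun k => (E k - E (k + 1)) / c) atTop (𝓝 0) := by
    simpa using (hlim.sub (hlim.comp (tendsto_add_atTop_nat 1))).div_const c
  exact squeeze_zero ha (fun k => by rw [le_div_iff₀ hc]; linarith [hE k]) hgap

theorem Filter.Tendsto.comp_add_one_of_tendsto_norm_sub {X : Type*} [SeminormedAddCommGroup X]
    {x : ℕ → X} {φ : ℕ → ℕ} {a : X} (hx : Tendsto (fun l => x (φ l)) atTop (𝓝 a))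
    (hφ : Tendsto φ atTop atTop) (hstep : Tendsto (fun k => ‖x k - x (k + 1)‖) atTop (𝓝 0)) :
    Tendsto (fun l => x (φ l + 1)) atTop (𝓝 a) := by
  have hgap : Tendsto (fun l => x (φ l) - x (φ l + 1)) atTop (𝓝 0) :=
    tendsto_zero_iff_norm_tendsto_zero.2 (hstep.comp hφ)
  simpa using hx.sub hgap

theorem exists_critical_of_tendsto {n : ℕ} {f' : Euc n → Euc n} {g : Euc n → EReal}
    {h : Euc n → ℝ} (hf' : Continuous f') (hg : LowerSemicontinuous g) (hg_bot : ∀ z, g z ≠ ⊥)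
    (hh : Continuous h) {w p y η ξ : ℕ → Euc n} {x₀ : Euc n} (hw : Tendsto w atTop (𝓝 x₀))
    (hp : Tendsto p atTop (𝓝 x₀)) (hy : Tendsto y atTop (𝓝 x₀))
    (hη : ∀ k, η k ∈ SubdiffR h (w k)) (hξ : ∀ k, ξ k ∈ SubdiffE g (p k))
    (hres : Tendsto (fun k => ξ k + f' (y k) - η k) atTop (𝓝 0)) :
    ∃ ξ ∈ SubdiffE g x₀, ∃ ζ ∈ SubdiffR h x₀, f' x₀ + ξ - ζ = 0 := by
  obtain ⟨C, hC⟩ := (isCompact_closedBall x₀ 2).exists_bound_of_continuousOn hh.continuousOn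
  have hbdd : ∀ᶠ k in atTop, η k ∈ Metric.closedBall (0 : Euc n) (2 * C) := by
    filter_upwards [hw.eventually (Metric.closedBall_mem_nhds x₀ one_pos)] with k hk
    rw [mem_closedBall_zero_iff]
    refine norm_le_of_mem_subdiffR (hη k) fun z hz => ?_
    refine Real.norm_eq_abs _ ▸ hC z (Metric.closedBall_subset_closedBall' ?_ hz)
    linarith [Metric.mem_closedBall.1 hk]
  obtain ⟨ζ, -, ψ, hψ, hηψ⟩ :=
    tendsto_subseq_of_frequently_bounded Metric.isBounded_closedBall hbdd.frequently
  have hψ' := hψ.tendsto_atTop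
  have hξψ : Tendsto (fun k => ξ (ψ k)) atTop (𝓝 (ζ - f' x₀)) := by
    simpa using (hres.comp hψ').add (hηψ.sub ((hf'.tendsto x₀).comp (hy.comp hψ')))
  exact ⟨ζ - f' x₀, mem_subdiffE_of_tendsto hg hg_bot (hp.comp hψ') hξψ fun k => hξ (ψ k),
    ζ, mem_subdiffR_of_tendsto hh (hw.comp hψ') hηψ fun k => hη (ψ k), by abel⟩

namespace IsCDCA

variable {n : ℕ} {f' : Euc n → Euc n} {h : Euc n → ℝ} {P : ℝ → Euc n → Euc n} {lam mu δ : ℝ}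
  {x : ℕ → Euc n} {g : Euc n → EReal} {L : ℝ}

theorem exists_mem_subdiff (hx : IsCDCA f' h P lam mu δ x) (hP : IsProx g P) (hg : ProperE g)
    (hgc : ConvexEReal g) (hmu : mu = 2 / (2 * lam + L)) (hpos : 0 < 2 * lam + L) (k : ℕ) :
    ∃ η ∈ SubdiffR h (x (k + 1)), ∃ y, ‖x (k + 2) - y‖ ≤ δ * ‖x k - x (k + 1)‖ ∧
      g (x (k + 2)) ≠ ⊤ ∧
      (L / 2) • (y - x (k + 2)) + lam • (x (k + 1) - x (k + 2)) - f' y + η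
        ∈ SubdiffE g (x (k + 2)) := by
  obtain ⟨η, hη, y, hxk, hy⟩ := hx k
  have hmu_pos : 0 < mu := by rw [hmu]; positivity
  have hmem := hP.inv_smul_sub_mem_subdiffE hg hgc hmu_pos
    ((1 - mu * lam) • y - mu • f' y + (mu * lam) • x (k + 1) + mu • η)
  rw [← hxk] at hmem
  refine ⟨η, hη, y, hy, hxk ▸ hP.ne_top hg hmu_pos _, ?_⟩
  have hmuL : mu * (L / 2) = 1 - mu * lam := by rw [hmu]; field_simp; ring
  convert hmem using 1
  rw [eq_inv_smul_iff₀ hmu_pos.ne']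
  match_scalars <;> linarith

theorem tendsto_norm_sub_succ {f : Euc n → ℝ} (hx : IsCDCA f' h P lam mu δ x) (hLpos : 0 < L)
    (hfc : ConvexOn ℝ univ f) (hf : ∀ z, HasGradientAt f (f' z) z)
    (hL : ∀ z w, ‖f' z - f' w‖ ≤ L * ‖z - w‖) (hg : ProperE g) (hgc : ConvexEReal g)
    (hglsc : LowerSemicontinuous g) (hh : Continuous h) (hP : IsProx g P) (hlam : 0 < lam)
    (hδ : δ ∈ Ico 0 (2 * lam / L)) (hmu : mu = 2 / (2 * lam + L)) {φ : ℕ → ℕ}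
    (hφ : Tendsto φ atTop atTop) {x₀ : Euc n} (hlim : Tendsto (fun l => x (φ l)) atTop (𝓝 x₀)) :
    Tendsto (fun k => ‖x k - x (k + 1)‖) atTop (𝓝 0) := by
  choose η hη y hy hdom hξ using hx.exists_mem_subdiff hP hg hgc hmu (by positivity)
  set τ := L ^ 2 * δ ^ 2 / (8 * lam)
  have hτ : τ < lam / 2 := by
    have hδL := (lt_div_iff₀ hLpos).1 hδ.2
    rw [div_lt_iff₀ (by positivity)]
    nlinarith [mul_nonneg hδ.1 hLpos.le]
  -- starts at `x 2`, the first iterate known to lie in `dom g`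
  set E : ℕ → ℝ := fun k => f (x (k + 2)) - h (x (k + 2)) + (g (x (k + 2))).toReal
    + τ * ‖x (k + 1) - x (k + 2)‖ ^ 2
  have hdecr : ∀ k, E (k + 1) + (lam / 2 - τ) * ‖x (k + 2) - x (k + 3)‖ ^ 2 ≤ E k := by
    intro k
    have hstep : f (x (k + 3)) - h (x (k + 3)) + (g (x (k + 3))).toReal
        + lam / 2 * ‖x (k + 2) - x (k + 3)‖ ^ 2 ≤ f (x (k + 2)) - h (x (k + 2))
        + (g (x (k + 2))).toReal + L ^ 2 / (8 * lam) * ‖x (k + 3) - y (k + 1)‖ ^ 2 :=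
      merit_descent_of_mem_subdiff hLpos hlam hfc hf hL hg.1 (hdom k) (hdom (k + 1))
        (hη (k + 1)) (hξ (k + 1))
    have hyk : L ^ 2 / (8 * lam) * ‖x (k + 3) - y (k + 1)‖ ^ 2
        ≤ τ * ‖x (k + 1) - x (k + 2)‖ ^ 2 := by
      rw [show τ = L ^ 2 / (8 * lam) * δ ^ 2 by ring, mul_assoc, ← mul_pow]
      gcongr
      exact hy (k + 1)
    show f (x (k + 3)) - h (x (k + 3)) + (g (x (k + 3))).toReal
        + τ * ‖x (k + 2) - x (k + 3)‖ ^ 2 + (lam / 2 - τ) * ‖x (k + 2) - x (k + 3)‖ ^ 2 ≤ E k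
    linarith
  have hanti : Antitone E := antitone_nat_of_succ_le fun k => by
    linarith [hdecr k, mul_nonneg (sub_nonneg.2 hτ.le) (sq_nonneg ‖x (k + 2) - x (k + 3)‖)]
  -- `E` is bounded below because the objective is bounded below near the cluster point `x₀`
  have hbdd : BddBelow (range E) := by
    obtain ⟨r, hr⟩ := hglsc.exists_real_eventually_lt (hg.1 x₀)
    have hfh : Continuous fun z => f z - h z :=
      (continuous_iff_continuousAt.2 fun z => (hf z).differentiableAt.continuousAt).sub hh
    have hev : ∀ᶠ l in atTop, (r : EReal) < g (x (φ l)) ∧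
        f x₀ - h x₀ - 1 < f (x (φ l)) - h (x (φ l)) :=
      hlim.eventually (hr.and ((hfh.tendsto x₀).eventually_const_lt (sub_one_lt _)))
    refine ⟨f x₀ - h x₀ - 1 + r, forall_mem_range.2 fun k => ?_⟩
    obtain ⟨l, ⟨hgl, hfl⟩, hkl⟩ := (hev.and (hφ.eventually_ge_atTop (k + 2))).exists
    obtain ⟨m, hkm, hm⟩ : ∃ m, k ≤ m ∧ φ l = m + 2 := ⟨φ l - 2, by omega, by omega⟩
    rw [hm] at hgl hfl
    rw [← EReal.coe_toReal (hdom m) (hg.1 _), EReal.coe_lt_coe_iff] at hgl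
    have hτ0 : 0 ≤ τ * ‖x (m + 1) - x (m + 2)‖ ^ 2 := by positivity
    exact le_trans (by simp only [E]; linarith) (hanti hkm)
  have hsq := tendsto_zero_of_add_mul_le_of_bddBelow (a := fun k => ‖x (k + 2) - x (k + 3)‖ ^ 2)
    (sub_pos.2 hτ) (fun k => sq_nonneg _) hdecr hbdd
  rw [← tendsto_add_atTop_iff_nat 2]
  simpa [Real.sqrt_sq (norm_nonneg _)] using hsq.sqrt

end IsCDCA

theorem stmt8_general {n : ℕ}
    (f : Euc n → ℝ) (f' : Euc n → Euc n) (Lf : ℝ) (hLf : 0 < Lf)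
    (hfconv : ConvexOn ℝ Set.univ f)
    (hfgrad : ∀ z, HasGradientAt f (f' z) z)
    (hflip : ∀ z w, ‖f' z - f' w‖ ≤ Lf * ‖z - w‖)
    (g : Euc n → EReal) (hgproper : ProperE g) (hgconv : ConvexEReal g)
    (hglsc : LowerSemicontinuous g)
    (h : Euc n → ℝ) (hhconv : ConvexOn ℝ Set.univ h)
    (P : ℝ → Euc n → Euc n) (hP : IsProx g P)
    (lam δ mu : ℝ) (hlam : 0 < lam) (hδ : δ ∈ Set.Ioo 0 (2*lam/Lf))
    (hmu : mu = 2/(2*lam + Lf))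
    (x : ℕ → Euc n) (hx : IsCDCA f' h P lam mu δ x)
    (xhat : Euc n) (φ : ℕ → ℕ) (hφ : StrictMono φ)
    (hlim : Tendsto (fun l : ℕ => x (φ l)) atTop (nhds xhat)) :
    ∃ ξ ∈ SubdiffE g xhat, ∃ ζ ∈ SubdiffR h xhat, f' xhat + ξ - ζ = 0 := by
  have hh : Continuous h := hhconv.locallyLipschitz.continuous
  have hf' : Continuous f' :=
    (LipschitzWith.of_dist_le' fun z w => by simpa [dist_eq_norm] using hflip z w).continuous
  have hφ' := hφ.tendsto_atTop
  have hstep := hx.tendsto_norm_sub_succ hLf hfconv hfgrad hflip hgproper hgconv hglsc hh hP hlam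
    (Ioo_subset_Ico_self hδ) hmu hφ' hlim
  choose η hη y hy _ hξ using hx.exists_mem_subdiff hP hgproper hgconv hmu (by positivity)
  have hw := hlim.comp_add_one_of_tendsto_norm_sub hφ' hstep
  have hp : Tendsto (fun l => x (φ l + 2)) atTop (𝓝 xhat) :=
    hw.comp_add_one_of_tendsto_norm_sub ((tendsto_add_atTop_nat 1).comp hφ') hstep
  have hy' : Tendsto (fun l => y (φ l)) atTop (𝓝 xhat) := by
    have hgap : Tendsto (fun l => x (φ l + 2) - y (φ l)) atTop (𝓝 0) :=
      squeeze_zero_norm (fun l => hy (φ l)) (by simpa using (hstep.comp hφ').const_mul δ)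
    simpa using hp.sub hgap
  refine exists_critical_of_tendsto hf' hglsc hgproper.1 hh hw hp hy' (fun l => hη (φ l))
    (fun l => hξ (φ l)) ?_
  have hres : Tendsto (fun l => (Lf / 2) • (y (φ l) - x (φ l + 2))
      + lam • (x (φ l + 1) - x (φ l + 2))) atTop (𝓝 0) := by
    simpa using ((hy'.sub hp).const_smul (Lf / 2)).add ((hw.sub hp).const_smul lam)
  exact hres.congr fun l => by abel

/-- For a cDCA sequence with `x⁰ ∈ dom g` and `F = f + g - h`
level-bounded, every accumulation point `x̂` of the sequence is a critical point of `F`,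
i.e. `0 ∈ ∇f(x̂) + ∂g(x̂) - ∂h(x̂)`. (Here `x 0 = x⁻¹` and `x (k+1) = xᵏ`.) -/
theorem stmt8 {n : ℕ}
    (f : Euc n → ℝ) (f' : Euc n → Euc n) (Lf : ℝ) (hLf : 0 < Lf)
    (hfconv : ConvexOn ℝ Set.univ f)
    (hfgrad : ∀ z, HasGradientAt f (f' z) z)
    (hflip : ∀ z w, ‖f' z - f' w‖ ≤ Lf * ‖z - w‖)
    (g : Euc n → EReal) (hgproper : ProperE g) (hgconv : ConvexEReal g)
    (hglsc : LowerSemicontinuous g)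
    (h : Euc n → ℝ) (hhconv : ConvexOn ℝ Set.univ h)
    (F : Euc n → EReal) (hF : ∀ z, F z = ((f z - h z : ℝ) : EReal) + g z)
    (P : ℝ → Euc n → Euc n) (hP : IsProx g P)
    (lam δ mu tau : ℝ) (hlam : 0 < lam) (hδ : δ ∈ Set.Ioo 0 (2*lam/Lf))
    (hmu : mu = 2/(2*lam + Lf)) (htau : tau = Lf^2 * δ^2 / (8*lam))
    (x : ℕ → Euc n) (hx : IsCDCA f' h P lam mu δ x) (hx0 : g (x 1) ≠ ⊤)
    (hlevel : ∀ r : ℝ, Bornology.IsBounded {z : Euc n | F z ≤ (r : EReal)})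
    (xhat : Euc n) (φ : ℕ → ℕ) (hφ : StrictMono φ)
    (hlim : Tendsto (fun l : ℕ => x (φ l)) atTop (nhds xhat)) :
    ∃ ξ ∈ SubdiffE g xhat, ∃ ζ ∈ SubdiffR h xhat, f' xhat + ξ - ζ = 0 :=
  stmt8_general f f' Lf hLf hfconv hfgrad hflip g hgproper hgconv hglsc h hhconv P hP lam δ mu hlam
    hδ hmu x hx xhat φ hφ hlim
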